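/- arXiv:math/0510222 — 3 statements merged into one kernel-verified Lean document; each statement's English description precedes it below -/
import Mathlib

section
/- If x ∈ R satisfies N(x) = 1, then N ∘ j'_x + h'_x ∘ T = id_R, i.e., for all a ∈ R, N(x·t(a)) + h'_x(T(a)) = a. -/
/-!
Write `Nᵢ y = y + t y + ⋯ + t^{i-1} y`. Since `t^{-i}(t a - a) = t^{-(i-1)} a - t^{-i} a`, the
`i`-th summand of `h'_x(T a)` is `Nᵢ(x t^{-(i-1)} a) - Nᵢ(x t^{-i} a)`, and these telescope against
`Nᵢ₊₁(x t^{-i} a) = Nᵢ(x t^{-i} a) + t^i(x) a`. The outcome, valid for every automorphism `t`, is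
`Nₙ(x t^{-(n-1)} a) + h'_x(T a) = Nₙ(x) a`; when `t^n = 1` the first term is `N(x t a)` and the
right-hand side is `a`.
-/

open Finset

namespace RingAut

variable {R : Type*} [Ring R] (t : RingAut R)

def partialNorm (i : ℕ) (y : R) : R :=
  ∑ k ∈ range i, (t ^ k) y

theorem partialNorm_zero (y : R) : t.partialNorm 0 y = 0 :=
  sum_range_zero _

theorem partialNorm_succ (i : ℕ) (y : R) :
    t.partialNorm (i + 1) y = t.partialNorm i y + (t ^ i) y :=
  sum_range_succ _ _

theorem partialNorm_sub (i : ℕ) (y z : R) :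
    t.partialNorm i (y - z) = t.partialNorm i y - t.partialNorm i z := by
  simp only [partialNorm, map_sub, sum_sub_distrib]

theorem inv_pow_succ_apply_apply (n : ℕ) (a : R) : (t ^ (n + 1))⁻¹ (t a) = (t ^ n)⁻¹ a := by
  rw [pow_succ', mul_inv_rev, mul_apply, inv_apply t, RingEquiv.symm_apply_apply]

theorem partialNorm_succ_add_partialNorm_sub (x a : R) (n : ℕ) :
    t.partialNorm (n + 1) (x * (t ^ (n + 1))⁻¹ (t a)) + t.partialNorm n (x * (t ^ n)⁻¹ (t a - a))
      = t.partialNorm n (x * (t ^ n)⁻¹ (t a)) + (t ^ n) x * a := by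
  rw [inv_pow_succ_apply_apply, partialNorm_succ, map_sub, mul_sub, partialNorm_sub, map_mul,
    inv_apply, RingEquiv.apply_symm_apply]
  abel

theorem partialNorm_add_sum_Ico_partialNorm (x a : R) :
    ∀ n : ℕ, t.partialNorm n (x * (t ^ n)⁻¹ (t a))
      + ∑ i ∈ Ico 1 n, t.partialNorm i (x * (t ^ i)⁻¹ (t a - a)) = t.partialNorm n x * a
  | 0 => by simp [partialNorm_zero]
  | 1 => by simp [partialNorm]
  | n + 2 => by
    have ih := partialNorm_add_sum_Ico_partialNorm x a (n + 1)
    set S := ∑ i ∈ Ico 1 (n + 1), t.partialNorm i (x * (t ^ i)⁻¹ (t a - a))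
    calc t.partialNorm (n + 2) (x * (t ^ (n + 2))⁻¹ (t a))
          + ∑ i ∈ Ico 1 (n + 2), t.partialNorm i (x * (t ^ i)⁻¹ (t a - a))
        = (t.partialNorm (n + 2) (x * (t ^ (n + 2))⁻¹ (t a))
            + t.partialNorm (n + 1) (x * (t ^ (n + 1))⁻¹ (t a - a))) + S := by
          rw [sum_Ico_succ_top (by omega)]
          abel
      _ = (t.partialNorm (n + 1) (x * (t ^ (n + 1))⁻¹ (t a)) + S) + (t ^ (n + 1)) x * a := by
          rw [partialNorm_succ_add_partialNorm_sub]
          abel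
      _ = t.partialNorm (n + 2) x * a := by
          rw [ih, partialNorm_succ t (n + 1), add_mul]

end RingAut

theorem stmt10_general (R : Type*) [Ring R] (t : RingAut R) (n : ℕ)
    (htn : t ^ n = 1) (x : R) (hx : (∑ i ∈ Finset.range n, (t ^ i) x) = 1) :
    ∀ a : R, (∑ i ∈ Finset.range n, (t ^ i) (x * t a)) + (∑ i ∈ Finset.Ico 1 n, ∑ k ∈ Finset.range i, (t ^ k) (x * ((t ^ i)⁻¹) (t a - a))) = a := by
  intro a
  have key := t.partialNorm_add_sum_Ico_partialNorm x a n
  rw [htn, inv_one, RingAut.one_apply] at key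
  simpa only [RingAut.partialNorm, hx, one_mul] using key

theorem stmt10 (R : Type*) [Ring R] (t : RingAut R) (n : ℕ) (hn : 2 ≤ n)
    (htn : t ^ n = 1) (x : R) (hx : (∑ i ∈ Finset.range n, (t ^ i) x) = 1) :
    ∀ a : R, (∑ i ∈ Finset.range n, (t ^ i) (x * t a)) + (∑ i ∈ Finset.Ico 1 n, ∑ k ∈ Finset.range i, (t ^ k) (x * ((t ^ i)⁻¹) (t a - a))) = a :=
  stmt10_general R t n htn x hx
end

section
/- If x ∈ R satisfies N(x) = 1, then j'_x ∘ N + T ∘ h'_x = id_R, i.e., for all a ∈ R, x·t(N(a)) + T(h'_x(a)) = a. -/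
/-!
Write `c i = x * t⁻ⁱ(a)` and `Sᵢ = 1 + t + ⋯ + tⁱ⁻¹`. The geometric sum telescopes,
`T ∘ Sᵢ = tⁱ - 1`, and `tⁱ(c i) = tⁱ(x) * a`, so `T(h'ₓ(a)) = ∑ᵢ₌₀ⁿ⁻¹ (tⁱ(x) * a - c i)`.
Since `tⁿ = 1`, reflecting the index turns `t(N(a))` into `∑ᵢ₌₀ⁿ⁻¹ t⁻ⁱ(a)`, so `x * t(N(a)) = ∑ᵢ c i`.
Adding up leaves `∑ᵢ tⁱ(x) * a = N(x) * a = a`.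
-/

open Finset

theorem Finset.sum_Ico_one_eq_sum_range {M : Type*} [AddCommMonoid M] {f : ℕ → M} (hf : f 0 = 0)
    (n : ℕ) : ∑ i ∈ Ico 1 n, f i = ∑ i ∈ range n, f i := by
  refine sum_subset (fun i hi => mem_range.2 (mem_Ico.1 hi).2) fun i hi hi' => ?_
  obtain rfl : i = 0 := by simp only [mem_Ico, mem_range] at hi hi'; omega
  exact hf

theorem sum_range_pow_inv_eq_sum_range_pow_succ {G M : Type*} [Group G] [AddCommMonoid M]
    {g : G} {n : ℕ} (hg : g ^ n = 1) (f : G → M) :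
    ∑ i ∈ range n, f (g ^ i)⁻¹ = ∑ i ∈ range n, f (g ^ (i + 1)) := by
  rw [← sum_range_reflect]
  refine sum_congr rfl fun i hi => congrArg f ?_
  rw [inv_eq_iff_mul_eq_one, ← pow_add, ← hg]
  congr 1
  have := mem_range.1 hi
  omega

namespace RingAut

variable {R : Type*}

theorem pow_succ_apply [Mul R] [Add R] (t : RingAut R) (k : ℕ) (c : R) :
    (t ^ (k + 1)) c = t ((t ^ k) c) := by
  rw [pow_succ', mul_apply]

theorem map_sum_range_pow_sub [NonUnitalNonAssocRing R] (t : RingAut R) (c : R) (i : ℕ) :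
    t (∑ k ∈ range i, (t ^ k) c) - ∑ k ∈ range i, (t ^ k) c = (t ^ i) c - c := by
  simp only [map_sum, ← sum_sub_distrib, ← pow_succ_apply]
  rw [sum_range_sub (fun k => (t ^ k) c), pow_zero, one_apply]

theorem map_sum_range_pow_eq_sum_range_pow_inv [Mul R] [AddCommMonoid R] {t : RingAut R} {n : ℕ}
    (htn : t ^ n = 1) (a : R) :
    t (∑ i ∈ range n, (t ^ i) a) = ∑ i ∈ range n, (t ^ i)⁻¹ a := by
  rw [sum_range_pow_inv_eq_sum_range_pow_succ htn fun s => s a, map_sum]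
  simp only [pow_succ_apply]

end RingAut

theorem stmt12_general (R : Type*) [Ring R] (t : RingAut R) (n : ℕ)
    (htn : t ^ n = 1) (x : R) (hx : (∑ i ∈ Finset.range n, (t ^ i) x) = 1) :
    ∀ a : R, x * t (∑ i ∈ Finset.range n, (t ^ i) a) + (t (∑ i ∈ Finset.Ico 1 n, ∑ k ∈ Finset.range i, (t ^ k) (x * ((t ^ i)⁻¹) a)) - (∑ i ∈ Finset.Ico 1 n, ∑ k ∈ Finset.range i, (t ^ k) (x * ((t ^ i)⁻¹) a))) = a := by
  intro a
  have hT : t (∑ i ∈ Ico 1 n, ∑ k ∈ range i, (t ^ k) (x * (t ^ i)⁻¹ a))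
        - ∑ i ∈ Ico 1 n, ∑ k ∈ range i, (t ^ k) (x * (t ^ i)⁻¹ a)
      = ∑ i ∈ range n, ((t ^ i) x * a - x * (t ^ i)⁻¹ a) := by
    rw [sum_Ico_one_eq_sum_range (by simp), map_sum, ← sum_sub_distrib]
    refine sum_congr rfl fun i _ => ?_
    rw [RingAut.map_sum_range_pow_sub, map_mul, RingAut.inv_apply, RingEquiv.apply_symm_apply]
  rw [hT, RingAut.map_sum_range_pow_eq_sum_range_pow_inv htn, mul_sum, ← sum_add_distrib]
  simp only [add_sub_cancel]
  rw [← sum_mul, hx, one_mul]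

theorem stmt12 (R : Type*) [Ring R] (t : RingAut R) (n : ℕ) (hn : 2 ≤ n)
    (htn : t ^ n = 1) (x : R) (hx : (∑ i ∈ Finset.range n, (t ^ i) x) = 1) :
    ∀ a : R, x * t (∑ i ∈ Finset.range n, (t ^ i) a) + (t (∑ i ∈ Finset.Ico 1 n, ∑ k ∈ Finset.range i, (t ^ k) (x * ((t ^ i)⁻¹) a)) - (∑ i ∈ Finset.Ico 1 n, ∑ k ∈ Finset.range i, (t ^ k) (x * ((t ^ i)⁻¹) a))) = a :=
  stmt12_general R t n htn x hx
end

section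
/- Suppose x ∈ R satisfies N(x) = 1. Then every element a ∈ R killed by the norm map (i.e., with N(a) = 0) satisfies a = T(h_x(a)). -/
/-! With `S i a = a + t a + ⋯ + t^{i-1} a` one has `t (S i a) = S (i+1) a - a`, so the terms
`G i = t^i x * S i a` satisfy `t (G i) = G (i+1) - t^{i+1} x * a`. Summing over `i < n`, the
`G`-terms telescope to `G n - G 0 = t^n x * N a`, while the remaining terms add up to
`t (N x) * a`. Hence `T (∑ G i) = t^n x * N a - t (N x) * a`, which is `-a` when `N a = 0` and
`N x = 1`; and `-∑ G i = h_x a` because `G 0 = 0`. -/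

open Finset

namespace RingAut

variable {R : Type*} [Ring R] (t : RingAut R)

lemma apply_pow_apply (i : ℕ) (y : R) : t ((t ^ i) y) = (t ^ (i + 1)) y := by
  rw [pow_succ', mul_apply]

lemma apply_sum_range_pow_apply (i : ℕ) (a : R) :
    t (∑ k ∈ range i, (t ^ k) a) = ∑ k ∈ range (i + 1), (t ^ k) a - a := by
  rw [sum_range_succ', map_sum, pow_zero, one_apply, add_sub_cancel_right]
  simp only [apply_pow_apply]

lemma apply_sub_self_sum_pow_mul_sum_pow (n : ℕ) (x a : R) :
    t (∑ i ∈ range n, (t ^ i) x * ∑ k ∈ range i, (t ^ k) a)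
      - ∑ i ∈ range n, (t ^ i) x * ∑ k ∈ range i, (t ^ k) a
      = (t ^ n) x * ∑ k ∈ range n, (t ^ k) a - t (∑ i ∈ range n, (t ^ i) x) * a := by
  let G : ℕ → R := fun i ↦ (t ^ i) x * ∑ k ∈ range i, (t ^ k) a
  have hG : ∀ i, t (G i) - G i = (G (i + 1) - G i) - (t ^ (i + 1)) x * a := fun i ↦ by
    simp only [G, map_mul, apply_sum_range_pow_apply, apply_pow_apply, mul_sub]
    abel
  calc t (∑ i ∈ range n, G i) - ∑ i ∈ range n, G i
      = ∑ i ∈ range n, (G (i + 1) - G i) - ∑ i ∈ range n, (t ^ (i + 1)) x * a := by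
        rw [map_sum, ← sum_sub_distrib, ← sum_sub_distrib]
        exact sum_congr rfl fun i _ ↦ hG i
    _ = G n - t (∑ i ∈ range n, (t ^ i) x) * a := by
        rw [sum_range_sub G, map_sum, sum_mul]
        simp only [G, apply_pow_apply, range_zero, sum_empty, mul_zero, sub_zero]

end RingAut

theorem stmt14_general (R : Type*) [Ring R] (t : RingAut R) (n : ℕ) (x : R)
    (hx : (∑ i ∈ Finset.range n, (t ^ i) x) = 1) :
    ∀ a : R, (∑ i ∈ Finset.range n, (t ^ i) a) = 0 → a = t (-∑ i ∈ Finset.Ico 1 n, (t ^ i) x * ∑ k ∈ Finset.range i, (t ^ k) a) - (-∑ i ∈ Finset.Ico 1 n, (t ^ i) x * ∑ k ∈ Finset.range i, (t ^ k) a) := by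
  intro a ha
  have hIco : ∑ i ∈ Ico 1 n, (t ^ i) x * ∑ k ∈ range i, (t ^ k) a
      = ∑ i ∈ range n, (t ^ i) x * ∑ k ∈ range i, (t ^ k) a := by
    refine sum_subset (fun i hi ↦ mem_range.2 (mem_Ico.1 hi).2) fun i _ hi ↦ ?_
    obtain rfl : i = 0 := by simp_all
    simp
  rw [map_neg, hIco, neg_sub_neg, ← neg_sub, t.apply_sub_self_sum_pow_mul_sum_pow, ha, hx,
    map_one, mul_zero, one_mul, zero_sub, neg_neg]

theorem stmt14 (R : Type*) [Ring R] (t : RingAut R) (n : ℕ) (hn : 2 ≤ n)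
    (htn : t ^ n = 1) (x : R) (hx : (∑ i ∈ Finset.range n, (t ^ i) x) = 1) :
    ∀ a : R, (∑ i ∈ Finset.range n, (t ^ i) a) = 0 → a = t (-∑ i ∈ Finset.Ico 1 n, (t ^ i) x * ∑ k ∈ Finset.range i, (t ^ k) a) - (-∑ i ∈ Finset.Ico 1 n, (t ^ i) x * ∑ k ∈ Finset.range i, (t ^ k) a) :=
  stmt14_general R t n x hx
end
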